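/- arXiv:0903.4577 — 3 statements merged into one kernel-verified Lean document; each statement's English description precedes it below -/
import Mathlib

section
/- Let C ∈ ℤ^{p×q} be a matrix and let D be the submatrix of C obtained by selecting a subset of columns of C. Then every Graver basis element of D, extended by zeros in the remaining columns of C, is a Graver basis element of C. In particular, |G(D)| ≤ |G(C)|. -/
/-- `z` is a Graver basis element of `D`: a nonzero integer kernel element of `D` that is
not the sum of two nonzero sign-compatible integer kernel elements. -/
def InGraver {κ ι : Type*} [Fintype κ] [Fintype ι] (D : Matrix κ ι ℤ) (z : ι → ℤ) : Prop :=
  z ≠ 0 ∧ D.mulVec z = 0 ∧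
    ¬ ∃ u v : ι → ℤ, u ≠ 0 ∧ v ≠ 0 ∧ D.mulVec u = 0 ∧ D.mulVec v = 0 ∧
      (∀ j, 0 ≤ u j * v j) ∧ z = u + v

/-!
Zero-padding `z ↦ extend e z 0` identifies the kernel of the column submatrix `C.submatrix id e`
with the kernel vectors of `C` supported on the range of `e`. A sign-compatible decomposition
`u + v` of a vector vanishes wherever the vector does, so any decomposition of a padded vector
is itself padded; hence padding preserves Graver elements, injectively. The Graver basis of `C`
is finite by Dickson's lemma, since it is an antichain for the componentwise order on pairs of
positive and negative parts, so the cardinality inequality follows.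
-/

open Function Matrix

section Finiteness

def posNegParts {ι : Type*} (z : ι → ℤ) : (ι → ℕ) × (ι → ℕ) :=
  (fun i => (z i).toNat, fun i => (-z i).toNat)

theorem posNegParts_injective {ι : Type*} : Injective (posNegParts (ι := ι)) := by
  intro a b hab
  funext i
  have hpos : (a i).toNat = (b i).toNat := congrFun (congrArg Prod.fst hab) i
  have hneg : (-a i).toNat = (-b i).toNat := congrFun (congrArg Prod.snd hab) i
  omega

theorem mul_sub_nonneg_of_posNegParts_le {ι : Type*} {u z : ι → ℤ}
    (h : posNegParts u ≤ posNegParts z) (i : ι) : 0 ≤ u i * (z i - u i) := by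
  have hpos : (u i).toNat ≤ (z i).toNat := h.1 i
  have hneg : (-u i).toNat ≤ (-z i).toNat := h.2 i
  rcases lt_trichotomy (u i) 0 with hu | hu | hu
  · exact mul_nonneg_of_nonpos_of_nonpos hu.le (by omega)
  · rw [hu, zero_mul]
  · exact mul_nonneg hu.le (by omega)

variable {κ ι : Type*} [Fintype κ] [Fintype ι]

theorem InGraver.eq_of_posNegParts_le {D : Matrix κ ι ℤ} {u z : ι → ℤ} (hu : InGraver D u)
    (hz : InGraver D z) (h : posNegParts u ≤ posNegParts z) : u = z := by
  by_contra hne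
  obtain ⟨hu0, hDu, -⟩ := hu
  obtain ⟨-, hDz, hz_indec⟩ := hz
  refine hz_indec ⟨u, z - u, hu0, sub_ne_zero.mpr (Ne.symm hne), hDu, ?_,
    mul_sub_nonneg_of_posNegParts_le h, (add_sub_cancel u z).symm⟩
  rw [mulVec_sub, hDz, hDu, sub_zero]

theorem setOf_inGraver_finite (D : Matrix κ ι ℤ) : {z : ι → ℤ | InGraver D z}.Finite := by
  have hanti : IsAntichain (· ≤ ·) (posNegParts '' {z | InGraver D z}) := by
    rintro _ ⟨u, hu, rfl⟩ _ ⟨z, hz, rfl⟩ hne h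
    exact hne (congrArg posNegParts (hu.eq_of_posNegParts_le hz h))
  have hpwo := (Set.isPWO_of_wellQuasiOrderedLE (Set.univ : Set ((ι → ℕ) × (ι → ℕ)))).mono
    (Set.subset_univ (posNegParts '' {z | InGraver D z}))
  exact Set.Finite.of_finite_image (hanti.finite_of_partiallyWellOrderedOn hpwo)
    posNegParts_injective.injOn

end Finiteness

section ColumnSubmatrix

variable {κ ι ι' : Type*} {e : ι' → ι}

theorem mulVec_extend_zero {R : Type*} [NonUnitalNonAssocSemiring R] [Fintype ι] [Fintype ι']
    (C : Matrix κ ι R) (he : Injective e) (z : ι' → R) :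
    C *ᵥ extend e z 0 = C.submatrix id e *ᵥ z := by
  funext k
  refine (Fintype.sum_of_injective e he _ _ (fun i hi => ?_) (fun i => ?_)).symm
  · rw [extend_apply' _ _ _ (by simpa using hi), Pi.zero_apply, mul_zero]
  · rw [he.extend_apply]; rfl

theorem extend_comp_eq_self {R : Type*} [Zero R] (he : Injective e) {u : ι → R}
    (hu : ∀ i ∉ Set.range e, u i = 0) : extend e (u ∘ e) 0 = u := by
  funext i
  by_cases hi : i ∈ Set.range e
  · obtain ⟨i', rfl⟩ := hi
    exact he.extend_apply _ _ _
  · rw [extend_apply' _ _ _ hi, hu i hi, Pi.zero_apply]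

theorem eq_zero_of_add_eq_zero_of_mul_nonneg {R : Type*} [CommRing R] [LinearOrder R]
    [IsStrictOrderedRing R] {a b : R} (hsum : a + b = 0) (hprod : 0 ≤ a * b) : a = 0 := by
  rw [eq_neg_of_add_eq_zero_right hsum, mul_neg, neg_nonneg] at hprod
  exact pow_eq_zero_iff two_ne_zero |>.mp (le_antisymm (by simpa [sq] using hprod) (sq_nonneg a))

variable [Fintype κ] [Fintype ι] [Fintype ι']

theorem InGraver.extend_zero {C : Matrix κ ι ℤ} (he : Injective e) {z : ι' → ℤ}
    (hz : InGraver (C.submatrix id e) z) : InGraver C (extend e z 0) := by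
  obtain ⟨hz0, hCz, hz_indec⟩ := hz
  refine ⟨fun h => hz0 (extend_injective he (0 : ι → ℤ) (h.trans (Function.extend_zero e).symm)),
    by rw [mulVec_extend_zero C he, hCz], ?_⟩
  rintro ⟨u, v, hu0, hv0, hCu, hCv, hsign, hsum⟩
  have hvanish : ∀ i ∉ Set.range e, u i = 0 ∧ v i = 0 := fun i hi => by
    have huv : u i + v i = 0 := by
      rw [← Pi.add_apply, ← hsum, extend_apply' _ _ _ hi, Pi.zero_apply]
    exact ⟨eq_zero_of_add_eq_zero_of_mul_nonneg huv (hsign i),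
      eq_zero_of_add_eq_zero_of_mul_nonneg ((add_comm _ _).trans huv)
        ((mul_comm _ _).trans_ge (hsign i))⟩
  have hu : extend e (u ∘ e) 0 = u := extend_comp_eq_self he fun i hi => (hvanish i hi).1
  have hv : extend e (v ∘ e) 0 = v := extend_comp_eq_self he fun i hi => (hvanish i hi).2
  refine hz_indec ⟨u ∘ e, v ∘ e, ?_, ?_, ?_, ?_, fun i => hsign (e i), ?_⟩
  · rintro h; rw [h, Function.extend_zero] at hu; exact hu0 hu.symm
  · rintro h; rw [h, Function.extend_zero] at hv; exact hv0 hv.symm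
  · rw [← mulVec_extend_zero C he, hu, hCu]
  · rw [← mulVec_extend_zero C he, hv, hCv]
  · rw [← extend_comp he z 0, hsum]; rfl

end ColumnSubmatrix

/-- Graver basis elements of a column submatrix extend by zeros to Graver basis
elements of the full matrix; in particular the Graver basis can only get larger. -/
theorem graver_of_column_submatrix
    (p q q' : ℕ) (C : Matrix (Fin p) (Fin q) ℤ) (e : Fin q' → Fin q)
    (he : Function.Injective e) :
    (∀ z : Fin q' → ℤ, InGraver (C.submatrix id e) z →
      InGraver C (Function.extend e z (fun _ => (0 : ℤ)))) ∧
    {z : Fin q' → ℤ | InGraver (C.submatrix id e) z}.ncard ≤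
      {z : Fin q → ℤ | InGraver C z}.ncard :=
  ⟨fun _ hz => hz.extend_zero he,
    Set.ncard_le_ncard_of_injOn (extend e · 0) (fun _ hz => hz.extend_zero he)
      (extend_injective he 0).injOn (setOf_inGraver_finite C)⟩
end

section
/- Let A ∈ ℤ^{d×n}, B ∈ ℤ^{m×n} be fixed and let Ā^(N) denote the matrix with first n rows (I_n I_n ⋯ I_n −I_n 0), next m rows (B B ⋯ B 0 I_m-style slack columns), and N diagonal blocks A in the remaining rows (columns grouped as x^1,…,x^N, y, s). Then Ā^(N) is obtained by deleting columns and zero rows from an N-fold matrix built from the fixed blocks (A 0 0) and ((I_n, −I_n, 0); (0, 0, I_n); (B, 0, 0)); consequently the sizes and encoding lengths of the Graver bases of Ā^(N), N = 1, 2, …, grow only polynomially in N. -/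
/-- A crude binary-free encoding length of an integer vector. -/
def encLen {ι : Type*} [Fintype ι] (z : ι → ℤ) : ℕ := ∑ j, ((z j).natAbs + 1)

/-- The constraint matrix of the potential-minimization problem: rows
`∑ᵢ xⁱ - y = 0`, `∑ᵢ B xⁱ + s = b⁰`, `A xⁱ = bⁱ`; columns grouped as
`x¹,…,xᴺ` (inl), then `y` (inr inl) and the slacks `s` (inr inr). -/
def AbarN {d n m : ℕ} (A : Matrix (Fin d) (Fin n) ℤ) (B : Matrix (Fin m) (Fin n) ℤ)
    (N : ℕ) :
    Matrix ((Fin n ⊕ Fin m) ⊕ Fin N × Fin d) ((Fin N × Fin n) ⊕ (Fin n ⊕ Fin m)) ℤ :=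
  fun r c =>
    match r, c with
    | Sum.inl (Sum.inl j0), Sum.inl (_, j) => if j = j0 then 1 else 0
    | Sum.inl (Sum.inl j0), Sum.inr (Sum.inl j) => if j = j0 then -1 else 0
    | Sum.inl (Sum.inl _), Sum.inr (Sum.inr _) => 0
    | Sum.inl (Sum.inr r), Sum.inl (_, j) => B r j
    | Sum.inl (Sum.inr _), Sum.inr (Sum.inl _) => 0
    | Sum.inl (Sum.inr r), Sum.inr (Sum.inr r') => if r' = r then 1 else 0
    | Sum.inr (i', r), Sum.inl (i, j) => if i' = i then A r j else 0
    | Sum.inr _, Sum.inr _ => 0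

/-!
Decompose every brick of a Graver element `z` of an `N`-fold matrix conformally into Graver
elements of the diagonal block `A`. Counting how often each Graver element of `A` is used, next to
the coordinates of `z` outside the bricks, gives a kernel vector `w` of a matrix `(T·G(A) | F)`
that does not depend on `N`. A conformal splitting of `w` splits the multiset of pieces and hence
`z`, so `w` is a Graver element of that fixed matrix, and `‖z‖₁ ≤ ‖w‖₁ (1 + max_{g ∈ G(A)} ‖g‖₁)`
is bounded independently of `N`. An integer vector of `ℓ₁`-norm at most `C` in dimension `D` is
determined by its at most `C` nonzero entries, so there are at most `(D (2C + 1) + 1)^C` of them;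
for `Ā⁽ᴺ⁾`, an `N`-fold matrix with `T = (I; B)` and `F = diag(-I, I)`, `D = N n + n + m`.
-/

open Finset Matrix

open scoped Kronecker

lemma Int.natAbs_add_eq_add_iff (a b : ℤ) :
    (a + b).natAbs = a.natAbs + b.natAbs ↔ 0 ≤ a * b := by
  rw [mul_nonneg_iff, ← abs_add_eq_add_abs_iff]
  zify

lemma Matrix.mulVec_multiset_sum {m n R : Type*} [Fintype n] [CommSemiring R] (M : Matrix m n R)
    (S : Multiset (n → R)) : M *ᵥ S.sum = (S.map (M *ᵥ ·)).sum :=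
  map_multiset_sum (Matrix.mulVecLin M) S

lemma Multiset.sum_map_eq_sum_count {γ β : Type*} [Fintype γ] [DecidableEq γ]
    [AddCommMonoid β] (M : Multiset γ) (f : γ → β) : (M.map f).sum = ∑ g, M.count g • f g := by
  rw [Finset.sum_multiset_map_count]
  exact sum_subset (subset_univ _) fun g _ hg => by
    simp [Multiset.count_eq_zero.mpr (by simpa using hg)]

lemma Multiset.sum_map_finsetSum {α β γ : Type*} [AddCommMonoid β] (s : Finset γ)
    (S : γ → Multiset α) (f : α → β) :
    ((∑ i ∈ s, S i).map f).sum = ∑ i ∈ s, ((S i).map f).sum := by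
  classical
  induction s using Finset.induction_on <;> simp_all

lemma Multiset.exists_eq_add_of_le_map {α β : Type*} [DecidableEq β] {f : α → β}
    {M : Multiset β} {P : Multiset α} (h : M ≤ P.map f) : ∃ Q R, P = Q + R ∧ Q.map f = M := by
  induction P using Multiset.induction_on generalizing M with
  | empty => exact ⟨0, 0, by simp, (Multiset.le_zero.mp (by simpa using h)).symm⟩
  | cons a P ih =>
    by_cases ha : f a ∈ M
    · obtain ⟨Q, R, rfl, hQ⟩ := ih (Multiset.erase_le_iff_le_cons.mpr (by simpa using h))
      exact ⟨a ::ₘ Q, R, by simp, by simp [hQ, Multiset.cons_erase ha]⟩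
    · obtain ⟨Q, R, rfl, hQ⟩ := ih ((Multiset.le_cons_of_notMem ha).mp (by simpa using h))
      exact ⟨Q, a ::ₘ R, by simp, hQ⟩

lemma Finset.card_filter_powerset_card_le {β : Type*} [DecidableEq β] (s : Finset β) (k : ℕ) :
    #{t ∈ s.powerset | #t ≤ k} ≤ (#s + 1) ^ k := by
  induction k with
  | zero =>
    calc _ ≤ #({∅} : Finset (Finset β)) := card_le_card fun t ht => by simp_all
      _ = _ := by simp
  | succ k ih =>
    have hsub : {t ∈ s.powerset | #t ≤ k + 1} ⊆
        (s.insertNone ×ˢ {t ∈ s.powerset | #t ≤ k}).image fun p => p.1.elim p.2 (insert · p.2) := by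
      intro t ht
      simp only [mem_filter, mem_powerset] at ht
      rcases t.eq_empty_or_nonempty with rfl | ⟨a, ha⟩
      · exact mem_image.mpr ⟨(none, ∅), by simp, rfl⟩
      · refine mem_image.mpr ⟨(some a, t.erase a), ?_, insert_erase ha⟩
        simp only [mem_product, mem_insertNone, Option.mem_def, mem_filter, mem_powerset,
          card_erase_of_mem ha]
        exact ⟨by simpa using ht.1 ha, (erase_subset a t).trans ht.1, by omega⟩
    calc _ ≤ _ := card_le_card hsub
      _ ≤ _ := card_image_le
      _ = (#s + 1) * #{t ∈ s.powerset | #t ≤ k} := by rw [card_product, card_insertNone]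
      _ ≤ (#s + 1) * (#s + 1) ^ k := Nat.mul_le_mul_left _ ih
      _ = _ := by ring

namespace Graver

section SignParts

variable {ι : Type*}

/-- `signParts u ≤ signParts z` says that `u` is conformally below `z`. -/
def signParts (z : ι → ℤ) : (ι → ℕ) × (ι → ℕ) := (fun j => (z j).toNat, fun j => (-z j).toNat)

lemma signParts_injective : Function.Injective (signParts : (ι → ℤ) → (ι → ℕ) × (ι → ℕ)) := by
  intro u z h
  simp only [signParts, Prod.mk.injEq, funext_iff] at h
  funext j
  have := h.1 j
  have := h.2 j
  omega

lemma mul_sub_nonneg_of_signParts_le {u z : ι → ℤ} (h : signParts u ≤ signParts z) (j : ι) :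
    0 ≤ u j * (z j - u j) := by
  have h1 : (u j).toNat ≤ (z j).toNat := h.1 j
  have h2 : (-u j).toNat ≤ (-z j).toNat := h.2 j
  rcases lt_trichotomy (u j) 0 with hu | hu | hu
  · exact mul_nonneg_of_nonpos_of_nonpos hu.le (by omega)
  · simp [hu]
  · exact mul_nonneg hu.le (by omega)

end SignParts

variable {ι κ : Type*} [Fintype ι] [Fintype κ]

def l1 (z : ι → ℤ) : ℕ := ∑ j, (z j).natAbs

lemma l1_eq_zero_iff {z : ι → ℤ} : l1 z = 0 ↔ z = 0 := by
  simp [l1, sum_eq_zero_iff, funext_iff]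

lemma natAbs_le_l1 (z : ι → ℤ) (j : ι) : (z j).natAbs ≤ l1 z :=
  single_le_sum (f := fun j => (z j).natAbs) (fun _ _ => Nat.zero_le _) (mem_univ j)

lemma card_filter_ne_zero_le_l1 (z : ι → ℤ) : #{j | z j ≠ 0} ≤ l1 z := by
  rw [card_filter]
  exact sum_le_sum fun j _ => by split_ifs <;> omega

lemma l1_add_le (u v : ι → ℤ) : l1 (u + v) ≤ l1 u + l1 v := by
  rw [l1, l1, l1, ← sum_add_distrib]
  exact sum_le_sum fun j _ => Int.natAbs_add_le _ _

lemma l1_sum_le (T : Multiset (ι → ℤ)) : l1 T.sum ≤ (T.map l1).sum := by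
  induction T using Multiset.induction_on with
  | empty => simp [l1]
  | cons g T ih => simpa using (l1_add_le g T.sum).trans (by omega)

lemma l1_add_eq_iff {u v : ι → ℤ} : l1 (u + v) = l1 u + l1 v ↔ ∀ j, 0 ≤ u j * v j := by
  simp only [l1, Pi.add_apply, ← sum_add_distrib]
  rw [sum_eq_sum_iff_of_le fun j _ => Int.natAbs_add_le _ _]
  simp [Int.natAbs_add_eq_add_iff]

/-- No cancellation occurs in any coordinate of the sum of `T`. -/
def IsConformalSum (T : Multiset (ι → ℤ)) : Prop := l1 T.sum = (T.map l1).sum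

lemma IsConformalSum.of_add {S R : Multiset (ι → ℤ)} (h : IsConformalSum (S + R)) :
    IsConformalSum S ∧ IsConformalSum R ∧ ∀ j, 0 ≤ S.sum j * R.sum j := by
  have hS := l1_sum_le S
  have hR := l1_sum_le R
  have hSR := l1_add_le S.sum R.sum
  rw [IsConformalSum, Multiset.sum_add, Multiset.map_add, Multiset.sum_add] at h
  exact ⟨by unfold IsConformalSum; omega, by unfold IsConformalSum; omega,
    l1_add_eq_iff.mp (by omega)⟩

lemma IsConformalSum.sum_eq_zero_iff {T : Multiset (ι → ℤ)} (h : IsConformalSum T) :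
    T.sum = 0 ↔ ∀ g ∈ T, g = 0 := by
  rw [← l1_eq_zero_iff, h, Multiset.sum_eq_zero_iff]
  simp [l1_eq_zero_iff]

theorem exists_isConformalSum (D : Matrix κ ι ℤ) {z : ι → ℤ} (hz : D *ᵥ z = 0) :
    ∃ T : Multiset {g // InGraver D g},
      (T.map Subtype.val).sum = z ∧ IsConformalSum (T.map Subtype.val) := by
  induction hM : l1 z using Nat.strong_induction_on generalizing z with
  | _ M ih =>
    by_cases h0 : z = 0
    · exact ⟨0, by simp [h0], by simp [IsConformalSum, l1]⟩
    by_cases hg : InGraver D z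
    · exact ⟨{⟨z, hg⟩}, by simp, by simp [IsConformalSum]⟩
    obtain ⟨u, v, hu0, hv0, hu, hv, huv, rfl⟩ : ∃ u v : ι → ℤ, u ≠ 0 ∧ v ≠ 0 ∧ D *ᵥ u = 0 ∧
        D *ᵥ v = 0 ∧ (∀ j, 0 ≤ u j * v j) ∧ z = u + v := by
      by_contra hdec
      exact hg ⟨h0, hz, hdec⟩
    have hl1 := l1_add_eq_iff.mpr huv
    have hu1 := (l1_eq_zero_iff (z := u)).not.mpr hu0
    have hv1 := (l1_eq_zero_iff (z := v)).not.mpr hv0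
    obtain ⟨Tu, hTu, hTu'⟩ := ih (l1 u) (by omega) hu rfl
    obtain ⟨Tv, hTv, hTv'⟩ := ih (l1 v) (by omega) hv rfl
    refine ⟨Tu + Tv, by simp [hTu, hTv], ?_⟩
    rw [IsConformalSum, hTu] at hTu'
    rw [IsConformalSum, hTv] at hTv'
    simp only [IsConformalSum, Multiset.map_add, Multiset.sum_add, hTu, hTv, hl1, hTu', hTv']

lemma InGraver.eq_of_signParts_le {D : Matrix κ ι ℤ} {u z : ι → ℤ} (hz : InGraver D z)
    (hu0 : u ≠ 0) (hu : D *ᵥ u = 0) (h : signParts u ≤ signParts z) : u = z := by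
  by_contra hne
  refine hz.2.2 ⟨u, z - u, hu0, sub_ne_zero.mpr (Ne.symm hne), hu, ?_,
    mul_sub_nonneg_of_signParts_le h, by abel⟩
  rw [mulVec_sub, hz.2.1, hu, sub_zero]

/-- Graver elements are pairwise conformally incomparable, so this is Dickson's lemma. -/
theorem finite_setOf_inGraver (D : Matrix κ ι ℤ) : {z | InGraver D z}.Finite := by
  refine Set.Finite.of_finite_image ?_ signParts_injective.injOn
  refine IsAntichain.finite_of_partiallyWellOrderedOn ?_ (Set.isPWO_of_wellQuasiOrderedLE _)
  rintro _ ⟨u, hu, rfl⟩ _ ⟨z, hz, rfl⟩ hne hle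
  exact hne (congrArg signParts (InGraver.eq_of_signParts_le hz hu.1 hu.2.1 hle))

noncomputable instance (D : Matrix κ ι ℤ) : Fintype {g // InGraver D g} :=
  (finite_setOf_inGraver D).fintype

lemma exists_l1_le_of_inGraver (D : Matrix κ ι ℤ) : ∃ c, ∀ g, InGraver D g → l1 g ≤ c := by
  obtain ⟨c, hc⟩ := ((finite_setOf_inGraver D).image l1).bddAbove
  exact ⟨c, fun g hg => hc ⟨g, hg, rfl⟩⟩

/-- Such a vector is determined by the graph of its at most `C` nonzero entries, a subset of
`α × [-C, C]`. -/
lemma card_le_of_forall_l1_le {α : Type*} [Fintype α] [DecidableEq α] {C : ℕ}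
    (s : Finset (α → ℤ)) (hs : ∀ z ∈ s, l1 z ≤ C) :
    #s ≤ (Fintype.card α * (2 * C + 1) + 1) ^ C := by
  set U : Finset (α × ℤ) := univ ×ˢ Icc (-C : ℤ) C
  have hU : #U = Fintype.card α * (2 * C + 1) := by
    simp only [U, card_product, card_univ, Int.card_Icc]
    congr 1
    omega
  let graph (z : α → ℤ) : Finset (α × ℤ) := (Finsupp.equivFunOnFinite.symm z).graph
  have hmaps : Set.MapsTo graph s ({t ∈ U.powerset | #t ≤ C} : Finset _) := by
    intro z hz
    rw [mem_coe, mem_filter, mem_powerset]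
    refine ⟨fun p hp => ?_, ?_⟩
    · obtain ⟨hzp, -⟩ := Finsupp.mem_graph_iff.mp hp
      have := natAbs_le_l1 z p.1
      have := hs z hz
      simp only [Finsupp.coe_equivFunOnFinite_symm] at hzp
      simp only [U, mem_product, mem_univ, mem_Icc, true_and]
      omega
    · refine le_trans ?_ ((card_filter_ne_zero_le_l1 z).trans (hs z hz))
      simp only [graph, Finsupp.graph, card_map]
      exact card_le_card fun a ha => by simpa using ha
  have hinj : Set.InjOn graph s := fun z _ z' _ h =>
    Finsupp.equivFunOnFinite.symm.injective (Finsupp.graph_injective _ _ h)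
  calc #s ≤ #{t ∈ U.powerset | #t ≤ C} := card_le_card_of_injOn graph hmaps hinj
    _ ≤ (#U + 1) ^ C := card_filter_powerset_card_le U C
    _ = _ := by rw [hU]

end Graver

namespace NFold

open Graver

variable {ι κ ρ ρ' : Type*} [Fintype ι] [Fintype κ]

/-- Unlike the paper's `C⁽ᴺ⁾`, the columns outside the `N` bricks are kept once, as the columns
`ρ'` of `F`; these are the `y` and `s` of `Ā⁽ᴺ⁾`. -/
def matrix (T : Matrix ρ ι ℤ) (F : Matrix ρ ρ' ℤ) (A : Matrix κ ι ℤ) (N : ℕ) :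
    Matrix (ρ ⊕ Fin N × κ) ((Fin N × ι) ⊕ ρ') ℤ :=
  fromBlocks (of fun r c => T r c.2) F ((1 : Matrix (Fin N) (Fin N) ℤ) ⊗ₖ A) 0

noncomputable def reducedMatrix (T : Matrix ρ ι ℤ) (F : Matrix ρ ρ' ℤ) (A : Matrix κ ι ℤ) :
    Matrix ρ ({g // InGraver A g} ⊕ ρ') ℤ :=
  fromCols (T * of fun j (g : {g // InGraver A g}) => g.1 j) F

variable {A : Matrix κ ι ℤ} {N : ℕ}

def place (p : Fin N × {g // InGraver A g}) : Fin N × ι → ℤ :=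
  fun c => if c.1 = p.1 then p.2.1 c.2 else 0

def assemble (P : Multiset (Fin N × {g // InGraver A g})) (e : ρ' → ℤ) :
    (Fin N × ι) ⊕ ρ' → ℤ :=
  Sum.elim (P.map place).sum e

def tally (P : Multiset (Fin N × {g // InGraver A g})) (e : ρ' → ℤ) :
    {g // InGraver A g} ⊕ ρ' → ℤ :=
  Sum.elim (fun g => ((P.map Prod.snd).count g : ℤ)) e

lemma l1_place (p : Fin N × {g // InGraver A g}) : l1 (place p) = l1 p.2.1 := by
  simp [l1, place, Fintype.sum_prod_type, apply_ite Int.natAbs]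

lemma one_kronecker_mulVec_place (p : Fin N × {g // InGraver A g}) :
    ((1 : Matrix (Fin N) (Fin N) ℤ) ⊗ₖ A) *ᵥ place p = 0 := by
  funext ⟨i, r⟩
  have h := congrFun p.2.2.2.1 r
  simp only [mulVec, dotProduct, Pi.zero_apply] at h
  simp [mulVec, dotProduct, place, Fintype.sum_prod_type, one_apply, ite_mul, h]

lemma of_mulVec_place (T : Matrix ρ ι ℤ) (p : Fin N × {g // InGraver A g}) :
    (of fun r c => T r c.2 : Matrix ρ (Fin N × ι) ℤ) *ᵥ place p = T *ᵥ p.2.1 := by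
  funext r
  simp [mulVec, dotProduct, place, Fintype.sum_prod_type]

lemma matrix_mulVec_assemble [Fintype ρ'] (T : Matrix ρ ι ℤ) (F : Matrix ρ ρ' ℤ)
    (P : Multiset (Fin N × {g // InGraver A g})) (e : ρ' → ℤ) :
    matrix T F A N *ᵥ assemble P e = Sum.elim (reducedMatrix T F A *ᵥ tally P e) 0 := by
  have hG : (of fun j (g : {g // InGraver A g}) => g.1 j) *ᵥ
      (fun g => ((P.map Prod.snd).count g : ℤ)) = ((P.map Prod.snd).map Subtype.val).sum := by
    funext j
    rw [Multiset.sum_map_eq_sum_count, Finset.sum_apply]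
    simp [mulVec, dotProduct, mul_comm]
  rw [matrix, reducedMatrix, fromBlocks_mulVec, fromCols_mulVec, assemble, tally,
    Sum.elim_comp_inl, Sum.elim_comp_inr, Sum.elim_comp_inl, Sum.elim_comp_inr, ← mulVec_mulVec,
    hG, mulVec_multiset_sum, mulVec_multiset_sum, mulVec_multiset_sum]
  simp [of_mulVec_place, one_kronecker_mulVec_place]

lemma assemble_add (P Q : Multiset (Fin N × {g // InGraver A g})) (e₁ e₂ : ρ' → ℤ) :
    assemble (P + Q) (e₁ + e₂) = assemble P e₁ + assemble Q e₂ := by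
  simp [assemble, Sum.elim_add_add]

lemma tally_add (P Q : Multiset (Fin N × {g // InGraver A g})) (e₁ e₂ : ρ' → ℤ) :
    tally (P + Q) (e₁ + e₂) = tally P e₁ + tally Q e₂ := by
  rw [tally, tally, tally, ← Sum.elim_add_add]
  congr
  funext g
  simp

lemma assemble_eq_zero_iff {P : Multiset (Fin N × {g // InGraver A g})} {e : ρ' → ℤ}
    (hP : IsConformalSum (P.map place)) : assemble P e = 0 ↔ tally P e = 0 := by
  have hplace (p : Fin N × {g // InGraver A g}) : place p ≠ 0 := fun h =>
    p.2.2.1 (funext fun j => by simpa [place] using congrFun h (p.1, j))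
  have hcount : (fun g => ((P.map Prod.snd).count g : ℤ)) = 0 ↔ P = 0 := by
    rw [← Multiset.map_eq_zero (f := Prod.snd), Multiset.eq_zero_iff_forall_notMem]
    simp [funext_iff, Multiset.count_eq_zero]
  rw [assemble, tally, ← Sum.elim_zero_zero, Sum.elim_eq_iff, ← Sum.elim_zero_zero,
    Sum.elim_eq_iff, hP.sum_eq_zero_iff]
  simp only [Multiset.forall_mem_map_iff, hplace, imp_false, ← Multiset.eq_zero_iff_forall_notMem,
    hcount]

lemma exists_assemble_eq [Fintype ρ'] (T : Matrix ρ ι ℤ) (F : Matrix ρ ρ' ℤ)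
    {z : (Fin N × ι) ⊕ ρ' → ℤ} (hz : matrix T F A N *ᵥ z = 0) :
    ∃ P : Multiset (Fin N × {g // InGraver A g}),
      IsConformalSum (P.map place) ∧ assemble P (z ∘ Sum.inr) = z := by
  have hbrick (i : Fin N) : A *ᵥ (fun j => z (Sum.inl (i, j))) = 0 := by
    funext r
    simpa [matrix, fromBlocks_mulVec, mulVec, dotProduct, Fintype.sum_prod_type, one_apply,
      ite_mul] using congrFun hz (Sum.inr (i, r))
  choose S hS hSc using fun i => exists_isConformalSum A (hbrick i)
  set P := ∑ i, (S i).map (Prod.mk i)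
  have hx : (P.map place).sum = z ∘ Sum.inl := by
    funext ⟨i, j⟩
    rw [Multiset.sum_map_finsetSum, Finset.sum_apply, sum_eq_single i]
    · have h := congrFun (hS i) j
      rw [Pi.multiset_sum_apply, Multiset.map_map] at h
      simpa [Multiset.map_map, Function.comp_def, place, Pi.multiset_sum_apply] using h
    · intro i' _ hi'
      simp [Multiset.map_map, Function.comp_def, place, Pi.multiset_sum_apply, Ne.symm hi']
    · simp
  refine ⟨P, ?_, ?_⟩
  · rw [IsConformalSum, hx, Multiset.map_map, Multiset.sum_map_finsetSum]
    simp only [l1, Function.comp_apply, Fintype.sum_prod_type]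
    refine sum_congr rfl fun i _ => ?_
    have h := hSc i
    rw [IsConformalSum, hS i] at h
    exact h.trans (by simp [Multiset.map_map, l1_place])
  · funext c
    rcases c with c | c
    · simp [assemble, hx]
    · rfl

/-- Sign compatibility with the counts of `tally P e` forces `a` and `b` to be nonnegative
there, so `a` selects a submultiset of `P` and `b` counts the rest. -/
lemma exists_split_of_tally_eq_add {P : Multiset (Fin N × {g // InGraver A g})} {e : ρ' → ℤ}
    {a b : {g // InGraver A g} ⊕ ρ' → ℤ} (hab : ∀ c, 0 ≤ a c * b c) (hw : tally P e = a + b) :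
    ∃ Q R, P = Q + R ∧ tally Q (a ∘ Sum.inr) = a ∧ tally R (b ∘ Sum.inr) = b := by
  have hcount (g : {g // InGraver A g}) :
      ((P.map Prod.snd).count g : ℤ) = a (Sum.inl g) + b (Sum.inl g) := congrFun hw (Sum.inl g)
  have hsign (g : {g // InGraver A g}) : 0 ≤ a (Sum.inl g) ∧ 0 ≤ b (Sum.inl g) := by
    rcases mul_nonneg_iff.mp (hab (Sum.inl g)) with h | h
    · exact h
    · have := hcount g
      omega
  set ν : {g // InGraver A g} → ℕ := fun g => (a (Sum.inl g)).toNat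
  obtain ⟨Q, R, rfl, hQ⟩ := Multiset.exists_eq_add_of_le_map (f := Prod.snd) (P := P)
    (M := Finsupp.toMultiset (Finsupp.equivFunOnFinite.symm ν)) <| by
    refine Multiset.le_iff_count.mpr fun g => ?_
    simp only [Finsupp.count_toMultiset, Finsupp.coe_equivFunOnFinite_symm, ν]
    have := hcount g
    have := hsign g
    omega
  have htallyQ : tally Q (a ∘ Sum.inr) = a := by
    funext c
    rcases c with g | r
    · simp [tally, hQ, Finsupp.count_toMultiset, ν, (hsign g).1]
    · rfl
  have he : a ∘ Sum.inr + b ∘ Sum.inr = e := by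
    funext r
    simpa [tally] using (congrFun hw (Sum.inr r)).symm
  refine ⟨Q, R, rfl, htallyQ, ?_⟩
  have h := tally_add Q R (a ∘ Sum.inr) (b ∘ Sum.inr)
  rw [he, hw, htallyQ] at h
  exact (add_left_cancel h).symm

lemma inGraver_tally [Fintype ρ] [Fintype ρ'] (T : Matrix ρ ι ℤ) (F : Matrix ρ ρ' ℤ)
    {z : (Fin N × ι) ⊕ ρ' → ℤ} (hz : InGraver (matrix T F A N) z)
    {P : Multiset (Fin N × {g // InGraver A g})} (hP : IsConformalSum (P.map place))
    (hzP : assemble P (z ∘ Sum.inr) = z) :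
    InGraver (reducedMatrix T F A) (tally P (z ∘ Sum.inr)) := by
  have hker (Q : Multiset (Fin N × {g // InGraver A g})) (e : ρ' → ℤ) :
      matrix T F A N *ᵥ assemble Q e = 0 ↔ reducedMatrix T F A *ᵥ tally Q e = 0 := by
    rw [matrix_mulVec_assemble, ← Sum.elim_zero_zero, Sum.elim_eq_iff]
    simp
  refine ⟨fun h0 => hz.1 (hzP ▸ (assemble_eq_zero_iff hP).mpr h0),
    (hker P _).mp (hzP ▸ hz.2.1), ?_⟩
  rintro ⟨a, b, ha0, hb0, ha, hb, hab, hw⟩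
  obtain ⟨Q, R, rfl, hQ, hR⟩ := exists_split_of_tally_eq_add hab hw
  have he : a ∘ Sum.inr + b ∘ Sum.inr = z ∘ Sum.inr := by
    funext r
    simpa [tally] using (congrFun hw (Sum.inr r)).symm
  obtain ⟨hQc, hRc, hQR⟩ := (Multiset.map_add place Q R ▸ hP).of_add
  refine hz.2.2 ⟨assemble Q (a ∘ Sum.inr), assemble R (b ∘ Sum.inr), ?_, ?_,
    (hker Q _).mpr (hQ ▸ ha), (hker R _).mpr (hR ▸ hb), ?_, ?_⟩
  · rwa [Ne, assemble_eq_zero_iff hQc, hQ]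
  · rwa [Ne, assemble_eq_zero_iff hRc, hR]
  · rintro (c | r)
    · exact hQR c
    · exact hab (Sum.inr r)
  · rw [← assemble_add, he, hzP]

lemma l1_assemble_le [Fintype ρ'] {c : ℕ} (hc : ∀ g, InGraver A g → l1 g ≤ c)
    (P : Multiset (Fin N × {g // InGraver A g})) (e : ρ' → ℤ) :
    l1 (assemble P e) ≤ l1 (tally P e) * (c + 1) := by
  have hplace : l1 (P.map place).sum ≤ Multiset.card P * c := by
    refine (l1_sum_le _).trans ?_
    rw [Multiset.map_map]
    refine (Multiset.sum_le_card_nsmul _ c ?_).trans (by simp)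
    intro x hx
    obtain ⟨p, -, rfl⟩ := Multiset.mem_map.mp hx
    simpa [l1_place] using hc _ p.2.2
  have hcard : ∑ g, (P.map Prod.snd).count g = Multiset.card P := by
    rw [Multiset.sum_count_eq_card fun _ _ => mem_univ _, Multiset.card_map]
  have hl1 : l1 (assemble P e) = l1 (P.map place).sum + l1 e := Fintype.sum_sum_type _
  have hl1' : l1 (tally P e) = Multiset.card P + l1 e := by
    simp [l1, tally, Fintype.sum_sum_type, hcard]
  rw [hl1, hl1']
  nlinarith

theorem exists_forall_inGraver_l1_le [Fintype ρ] [Fintype ρ'] (T : Matrix ρ ι ℤ)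
    (F : Matrix ρ ρ' ℤ) (A : Matrix κ ι ℤ) :
    ∃ C, ∀ N z, InGraver (matrix T F A N) z → l1 z ≤ C := by
  obtain ⟨c, hc⟩ := exists_l1_le_of_inGraver A
  obtain ⟨c', hc'⟩ := exists_l1_le_of_inGraver (reducedMatrix T F A)
  refine ⟨c' * (c + 1), fun N z hz => ?_⟩
  obtain ⟨P, hP, hzP⟩ := exists_assemble_eq T F hz.2.1
  calc l1 z = l1 (assemble P (z ∘ Sum.inr)) := by rw [hzP]
    _ ≤ l1 (tally P (z ∘ Sum.inr)) * (c + 1) := l1_assemble_le hc P _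
    _ ≤ c' * (c + 1) := Nat.mul_le_mul_right _ (hc' _ (inGraver_tally T F hz hP hzP))

end NFold

lemma encLen_eq_l1_add_card {ι : Type*} [Fintype ι] (z : ι → ℤ) :
    encLen z = Graver.l1 z + Fintype.card ι := by
  simp [encLen, Graver.l1, sum_add_distrib]

lemma abarN_eq_nfoldMatrix {d n m : ℕ} (A : Matrix (Fin d) (Fin n) ℤ)
    (B : Matrix (Fin m) (Fin n) ℤ) (N : ℕ) :
    AbarN A B N = NFold.matrix (fromRows 1 B) (fromBlocks (-1) 0 0 1) A N := by
  ext ((r | r) | ⟨i, r⟩) (⟨i', c⟩ | c | c) <;>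
    simp [AbarN, NFold.matrix, one_apply, eq_comm, apply_ite Neg.neg]

/-- For fixed `A` and `B`, the sizes and encoding lengths of the Graver bases of the
problem matrices `Ā⁽ᴺ⁾` grow only polynomially in `N`. -/
theorem abar_graver_polynomial_bound
    (d n m : ℕ) (A : Matrix (Fin d) (Fin n) ℤ) (B : Matrix (Fin m) (Fin n) ℤ) :
    ∃ p : Polynomial ℕ, ∀ N : ℕ,
      ∃ G : Finset (((Fin N × Fin n) ⊕ (Fin n ⊕ Fin m)) → ℤ),
        (↑G = {z | InGraver (AbarN A B N) z}) ∧
        G.card ≤ p.eval N ∧ (∑ z ∈ G, encLen z) ≤ p.eval N := by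
  obtain ⟨C, hC⟩ := NFold.exists_forall_inGraver_l1_le (fromRows 1 B)
    (fromBlocks (-1) 0 0 1 : Matrix (Fin n ⊕ Fin m) (Fin n ⊕ Fin m) ℤ) A
  set cols : Polynomial ℕ := Polynomial.X * (n : Polynomial ℕ) + ((n + m : ℕ) : Polynomial ℕ)
  refine ⟨(cols * (2 * C + 1) + 1) ^ C * (cols + C + 1), fun N => ?_⟩
  set G := (Graver.finite_setOf_inGraver (AbarN A B N)).toFinset
  have hcols : Fintype.card ((Fin N × Fin n) ⊕ (Fin n ⊕ Fin m)) = N * n + (n + m) := by simp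
  have hl1 (z) (hz : z ∈ G) : Graver.l1 z ≤ C :=
    hC N z (by simpa [G, abarN_eq_nfoldMatrix] using hz)
  have hcard : #G ≤ ((N * n + (n + m)) * (2 * C + 1) + 1) ^ C :=
    hcols ▸ Graver.card_le_of_forall_l1_le G hl1
  have henc (z) (hz : z ∈ G) : encLen z ≤ N * n + (n + m) + C := by
    rw [encLen_eq_l1_add_card, hcols]
    linarith [hl1 z hz]
  refine ⟨G, by simp [G], ?_, ?_⟩ <;> simp only [cols, Polynomial.eval_mul, Polynomial.eval_add,
    Polynomial.eval_pow, Polynomial.eval_X, Polynomial.eval_natCast, Polynomial.eval_ofNat,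
    Polynomial.eval_one, Nat.cast_id]
  · exact hcard.trans (Nat.le_mul_of_pos_right _ (Nat.succ_pos _))
  · calc ∑ z ∈ G, encLen z ≤ #G * (N * n + (n + m) + C) := sum_le_card_nsmul _ _ _ henc
      _ ≤ _ := Nat.mul_le_mul hcard (Nat.le_succ _)
end

section
/- Inverse integer optimization certificate: Let P = {x : Dx = d, 0 ≤ x ≤ u} ⊆ ℝ^n, x* ∈ P ∩ ℤ^n, and f_j : ℝ → ℝ convex. There exist λ_1,…,λ_n ≥ 0, not all zero, such that x* minimizes ∑_j λ_j f_j(x_j) over P ∩ ℤ^n, if and only if the linear system ∑_j [f_j(x*_j + g_j) − f_j(x*_j)] λ_j ≥ 0 for all g ∈ G(D) with x* + g ∈ P, together with λ ≥ 0 and ∑_j λ_j > 0, has a solution. -/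
/-- Feasibility for `P = {x : Dx = d, 0 ≤ x ≤ u}` (integer points). -/
def Feas {dd n : ℕ} (D : Matrix (Fin dd) (Fin n) ℤ) (dv : Fin dd → ℤ)
    (u : Fin n → ℤ) (x : Fin n → ℤ) : Prop :=
  D.mulVec x = dv ∧ ∀ j, 0 ≤ x j ∧ x j ≤ u j

open Set Finset

section Convexity

variable {𝕜 : Type*} [Field 𝕜] [LinearOrder 𝕜] [IsStrictOrderedRing 𝕜] {f : 𝕜 → 𝕜}

theorem ConvexOn.map_add_add_map_add_le (hf : ConvexOn 𝕜 univ f) (a : 𝕜) {s t : 𝕜}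
    (hs : 0 ≤ s) (ht : 0 ≤ t) : f (a + s) + f (a + t) ≤ f (a + s + t) + f a := by
  rcases hs.eq_or_lt with rfl | hs
  · simp [add_comm]
  rcases ht.eq_or_lt with rfl | ht
  · simp [add_comm]
  have h₁ := hf.secant_mono_aux1 (mem_univ a) (mem_univ (a + s + t))
    (y := a + s) (by linarith) (by linarith)
  have h₂ := hf.secant_mono_aux1 (mem_univ a) (mem_univ (a + s + t))
    (y := a + t) (by linarith) (by linarith)
  refine le_of_mul_le_mul_left ?_ (add_pos hs ht)
  linear_combination h₁ + h₂

theorem ConvexOn.map_add_add_map_add_le_of_mul_nonneg (hf : ConvexOn 𝕜 univ f) (a : 𝕜)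
    {s t : 𝕜} (hst : 0 ≤ s * t) : f (a + s) + f (a + t) ≤ f (a + s + t) + f a := by
  rcases mul_nonneg_iff.mp hst with ⟨hs, ht⟩ | ⟨hs, ht⟩
  · exact hf.map_add_add_map_add_le a hs ht
  · -- the nonnegative case seen from the far end `a + s + t`
    have := hf.map_add_add_map_add_le (a + s + t) (neg_nonneg.mpr hs) (neg_nonneg.mpr ht)
    ring_nf at this ⊢
    linarith

end Convexity

theorem Int.natAbs_add_of_mul_nonneg {a b : ℤ} (h : 0 ≤ a * b) :
    (a + b).natAbs = a.natAbs + b.natAbs := by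
  rcases mul_nonneg_iff.mp h with ⟨ha, hb⟩ | ⟨ha, hb⟩
  · exact Int.natAbs_add_of_nonneg ha hb
  · exact Int.natAbs_add_of_nonpos ha hb

section Graver

variable {κ ι : Type*} [Fintype κ] [Fintype ι] {D : Matrix κ ι ℤ}

theorem sum_natAbs_pos_of_ne_zero {z : ι → ℤ} (hz : z ≠ 0) : 0 < ∑ j, (z j).natAbs := by
  obtain ⟨j, hj⟩ := Function.ne_iff.mp hz
  exact Finset.sum_pos' (fun _ _ => Nat.zero_le _) ⟨j, mem_univ j, Int.natAbs_pos.mpr hj⟩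

theorem InGraver.kernel_induction {P : (ι → ℤ) → Prop} (zero : P 0)
    (graver : ∀ g, InGraver D g → P g)
    (add : ∀ a b, D.mulVec a = 0 → D.mulVec b = 0 → (∀ j, 0 ≤ a j * b j) →
      P a → P b → P (a + b))
    {z : ι → ℤ} (hz : D.mulVec z = 0) : P z := by
  induction hN : ∑ j, (z j).natAbs using Nat.strong_induction_on generalizing z with
  | _ N ih =>
    by_cases hz0 : z = 0
    · exact hz0 ▸ zero
    by_cases hg : InGraver D z
    · exact graver z hg
    obtain ⟨a, b, ha0, hb0, hka, hkb, hsign, rfl⟩ : ∃ a b : ι → ℤ, a ≠ 0 ∧ b ≠ 0 ∧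
        D.mulVec a = 0 ∧ D.mulVec b = 0 ∧ (∀ j, 0 ≤ a j * b j) ∧ z = a + b := by
      simpa [InGraver, hz0, hz] using hg
    have hsplit : ∑ j, (a j).natAbs + ∑ j, (b j).natAbs = N := by
      rw [← hN, ← sum_add_distrib]
      exact sum_congr rfl fun j _ => (Int.natAbs_add_of_mul_nonneg (hsign j)).symm
    have ha := sum_natAbs_pos_of_ne_zero ha0
    have hb := sum_natAbs_pos_of_ne_zero hb0
    exact add a b hka hkb hsign (ih _ (by omega) hka rfl) (ih _ (by omega) hkb rfl)

end Graver

theorem Feas.add_of_mul_nonneg {dd n : ℕ} {D : Matrix (Fin dd) (Fin n) ℤ} {dv : Fin dd → ℤ}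
    {u x a b : Fin n → ℤ} (hx : Feas D dv u x) (hxab : Feas D dv u (x + (a + b)))
    (ha : D.mulVec a = 0) (hab : ∀ j, 0 ≤ a j * b j) : Feas D dv u (x + a) := by
  refine ⟨by rw [Matrix.mulVec_add, ha, hx.1, add_zero], fun j => ?_⟩
  have hxj := hx.2 j
  have hxabj := hxab.2 j
  simp only [Pi.add_apply] at hxabj ⊢
  rcases mul_nonneg_iff.mp (hab j) with ⟨_, _⟩ | ⟨_, _⟩ <;> omega

section Increment

variable {ι : Type*} [Fintype ι] (f : ι → ℝ → ℝ) (lam : ι → ℝ)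

noncomputable def weightedIncrement (x g : ι → ℤ) : ℝ :=
  ∑ j, (f j ((x j : ℝ) + (g j : ℝ)) - f j (x j : ℝ)) * lam j

theorem weightedIncrement_eq_sub (x g : ι → ℤ) :
    weightedIncrement f lam x g =
      ∑ j, lam j * f j ((x + g) j : ℝ) - ∑ j, lam j * f j (x j : ℝ) := by
  rw [weightedIncrement, ← sum_sub_distrib]
  exact sum_congr rfl fun j _ => by push_cast [Pi.add_apply]; ring

variable {f lam}

theorem weightedIncrement_add_le (hf : ∀ j, ConvexOn ℝ univ (f j)) (hlam : ∀ j, 0 ≤ lam j)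
    (x : ι → ℤ) {a b : ι → ℤ} (hab : ∀ j, 0 ≤ a j * b j) :
    weightedIncrement f lam x a + weightedIncrement f lam x b ≤
      weightedIncrement f lam x (a + b) := by
  simp only [weightedIncrement, ← sum_add_distrib, ← add_mul]
  refine sum_le_sum fun j _ => mul_le_mul_of_nonneg_right ?_ (hlam j)
  have := (hf j).map_add_add_map_add_le_of_mul_nonneg (x j : ℝ)
    (s := (a j : ℝ)) (t := (b j : ℝ)) (by exact_mod_cast hab j)
  push_cast [Pi.add_apply]
  rw [← add_assoc]
  linarith

end Increment

theorem weightedIncrement_nonneg_of_graver {dd n : ℕ} {D : Matrix (Fin dd) (Fin n) ℤ}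
    {dv : Fin dd → ℤ} {u : Fin n → ℤ} {f : Fin n → ℝ → ℝ} (hf : ∀ j, ConvexOn ℝ univ (f j))
    {lam : Fin n → ℝ} (hlam : ∀ j, 0 ≤ lam j) {x : Fin n → ℤ} (hx : Feas D dv u x)
    (hG : ∀ g, InGraver D g → Feas D dv u (x + g) → 0 ≤ weightedIncrement f lam x g)
    {z : Fin n → ℤ} (hz : D.mulVec z = 0) (hxz : Feas D dv u (x + z)) :
    0 ≤ weightedIncrement f lam x z := by
  refine InGraver.kernel_induction
    (P := fun z => Feas D dv u (x + z) → 0 ≤ weightedIncrement f lam x z)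
    (by simp [weightedIncrement]) hG (fun a b ha hb hab iha ihb hxab => ?_) hz hxz
  have hxb : Feas D dv u (x + b) :=
    hx.add_of_mul_nonneg (add_comm a b ▸ hxab) hb fun j => mul_comm (a j) (b j) ▸ hab j
  linarith [iha (hx.add_of_mul_nonneg hxab ha hab), ihb hxb,
    weightedIncrement_add_le hf hlam x hab]

/-- Inverse integer optimization: weights `λ ≥ 0`, not all zero, making `x*` optimal
for `∑_j λ_j f_j(x_j)` exist iff the finite linear system over the feasible Graver
moves at `x*` is solvable. -/
theorem inverse_optimization_graver_criterion
    (dd n : ℕ) (D : Matrix (Fin dd) (Fin n) ℤ) (dv : Fin dd → ℤ) (u : Fin n → ℤ)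
    (f : Fin n → ℝ → ℝ) (hconv : ∀ j, ConvexOn ℝ Set.univ (f j))
    (xs : Fin n → ℤ) (hxs : Feas D dv u xs) :
    (∃ lam : Fin n → ℝ, (∀ j, 0 ≤ lam j) ∧ lam ≠ 0 ∧
      ∀ x : Fin n → ℤ, Feas D dv u x →
        ∑ j, lam j * f j (xs j : ℝ) ≤ ∑ j, lam j * f j (x j : ℝ)) ↔
    (∃ lam : Fin n → ℝ, (∀ j, 0 ≤ lam j) ∧ 0 < ∑ j, lam j ∧
      ∀ g : Fin n → ℤ, InGraver D g → Feas D dv u (xs + g) →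
        0 ≤ ∑ j, (f j ((xs j : ℝ) + (g j : ℝ)) - f j (xs j : ℝ)) * lam j) := by
  constructor
  · rintro ⟨lam, hlam, hne, hopt⟩
    refine ⟨lam, hlam, Fintype.sum_pos (lt_of_le_of_ne hlam hne.symm), fun g _ hg => ?_⟩
    change 0 ≤ weightedIncrement f lam xs g
    rw [weightedIncrement_eq_sub, sub_nonneg]
    exact hopt _ hg
  · rintro ⟨lam, hlam, hpos, hG⟩
    refine ⟨lam, hlam, by rintro rfl; simp at hpos, fun x hx => ?_⟩
    have hker : D.mulVec (x - xs) = 0 := by rw [Matrix.mulVec_sub, hx.1, hxs.1, sub_self]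
    have := weightedIncrement_nonneg_of_graver hconv hlam hxs hG hker (by rwa [add_sub_cancel])
    rwa [weightedIncrement_eq_sub, add_sub_cancel, sub_nonneg] at this
end
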